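/- arXiv:1907.06449 — 6 statements merged into one kernel-verified Lean document; each statement's English description precedes it below -/
import Mathlib

section
/- Let n ≥ 0, let B be an (n+1)×(n+1) real matrix, and let C be an invertible (n+1)×(n+1) real matrix such that C² = I and C·exp(tB) = exp(tB)·C for all t ∈ ℝ, where exp denotes the matrix exponential. Then the map A : ℝˣ → GL_{n+1}(ℝ) defined by A(r) = exp(B·log r) for r > 0 and A(r) = C·exp(B·log|r|) for r < 0 is well defined (each value is an invertible matrix) and is a group homomorphism: A(rs) = A(r)A(s) for all r, s ∈ ℝˣ. -/
open NormedSpace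

/-!
Write `A r = σ(r) · E(log |r|)`, where `σ(r)` is `1` for `r > 0` and `C` for `r < 0`, and
`E t = exp (t • B)`. Since `C² = 1`, `σ` is multiplicative on `ℝˣ`; since `log |·|` turns products
into sums and the `t • B` commute, `E ∘ log |·|` is multiplicative as well. As `C` commutes with
every `E t`, the product of these two commuting homomorphisms is again a homomorphism.
-/

section SignPart

variable {M : Type*} [Monoid M]

noncomputable def signPart (C : M) (r : ℝˣ) : M := if 0 < (r : ℝ) then 1 else C

theorem signPart_mul {C : M} (hC : C * C = 1) (r s : ℝˣ) :
    signPart C (r * s) = signPart C r * signPart C s := by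
  rcases r.ne_zero.lt_or_gt with hr | hr <;> rcases s.ne_zero.lt_or_gt with hs | hs <;>
    simp [signPart, hr, hs, hr.not_gt, hs.not_gt, hC, mul_pos_iff]

theorem isUnit_signPart {C : M} (hC : C * C = 1) (r : ℝˣ) : IsUnit (signPart C r) := by
  unfold signPart
  split
  · exact isUnit_one
  · exact ⟨⟨C, C, hC, hC⟩, rfl⟩

theorem Commute.signPart_left {C x : M} (h : Commute C x) (r : ℝˣ) :
    Commute (signPart C r) x := by
  unfold signPart
  split
  · exact Commute.one_left x
  · exact h

theorem ite_log_eq_signPart_mul (C : M) (E : ℝ → M) (r : ℝˣ) :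
    (if 0 < (r : ℝ) then E (Real.log r) else C * E (Real.log |(r : ℝ)|)) =
      signPart C r * E (Real.log |(r : ℝ)|) := by
  rw [Real.log_abs, signPart]
  split <;> simp

theorem signPart_mul_log_abs_mul {C : M} (hC : C * C = 1) {E : ℝ → M}
    (hE : ∀ a b, E (a + b) = E a * E b) (hCE : ∀ t, Commute C (E t)) (r s : ℝˣ) :
    signPart C (r * s) * E (Real.log |((r * s : ℝˣ) : ℝ)|) =
      signPart C r * E (Real.log |(r : ℝ)|) * (signPart C s * E (Real.log |(s : ℝ)|)) := by
  have hlog : Real.log |((r * s : ℝˣ) : ℝ)| = Real.log |(r : ℝ)| + Real.log |(s : ℝ)| := by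
    rw [Units.val_mul, abs_mul,
      Real.log_mul (abs_ne_zero.mpr r.ne_zero) (abs_ne_zero.mpr s.ne_zero)]
  rw [signPart_mul hC, hlog, hE, ((hCE _).signPart_left s).symm.mul_mul_mul_comm]

end SignPart

theorem Matrix.exp_add_smul {m : Type*} [Fintype m] [DecidableEq m] (B : Matrix m m ℝ)
    (a b : ℝ) : exp ((a + b) • B) = exp (a • B) * exp (b • B) := by
  rw [add_smul, Matrix.exp_add_of_commute]
  exact ((Commute.refl B).smul_left a).smul_right b

theorem pair_gives_group_hom_general (n : ℕ)
    (B : Matrix (Fin (n + 1)) (Fin (n + 1)) ℝ)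
    (C : Matrix (Fin (n + 1)) (Fin (n + 1)) ℝ)
    (hC2 : C * C = 1)
    (hcomm : ∀ t : ℝ, C * exp (t • B) = exp (t • B) * C)
    (A : ℝˣ → Matrix (Fin (n + 1)) (Fin (n + 1)) ℝ)
    (hA : ∀ r : ℝˣ, A r =
      if (0 : ℝ) < (r : ℝ) then exp (Real.log (r : ℝ) • B)
      else C * exp (Real.log |(r : ℝ)| • B)) :
    (∀ r : ℝˣ, IsUnit (A r)) ∧ ∀ r s : ℝˣ, A (r * s) = A r * A s := by
  have hA' : ∀ r, A r = signPart C r * exp (Real.log |(r : ℝ)| • B) := fun r =>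
    (hA r).trans (ite_log_eq_signPart_mul C (fun t => exp (t • B)) r)
  refine ⟨fun r => ?_, fun r s => ?_⟩
  · rw [hA']
    exact (isUnit_signPart hC2 r).mul (Matrix.isUnit_exp _)
  · rw [hA', hA', hA']
    exact signPart_mul_log_abs_mul hC2 (Matrix.exp_add_smul B) hcomm r s

/-- Reconstruction direction of the paper's Remark 3.3: a pair `(B, C)` with
`C² = I` and `C·exp(tB) = exp(tB)·C` for all `t ∈ ℝ` gives rise to a group
homomorphism `A : ℝˣ → GL_{n+1}(ℝ)` via `A(r) = exp(B log r)` for `r > 0` and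
`A(r) = C·exp(B log |r|)` for `r < 0`. -/
theorem pair_gives_group_hom (n : ℕ)
    (B : Matrix (Fin (n + 1)) (Fin (n + 1)) ℝ)
    (C : Matrix (Fin (n + 1)) (Fin (n + 1)) ℝ) (hC : IsUnit C)
    (hC2 : C * C = 1)
    (hcomm : ∀ t : ℝ, C * exp (t • B) = exp (t • B) * C)
    (A : ℝˣ → Matrix (Fin (n + 1)) (Fin (n + 1)) ℝ)
    (hA : ∀ r : ℝˣ, A r =
      if (0 : ℝ) < (r : ℝ) then exp (Real.log (r : ℝ) • B)
      else C * exp (Real.log |(r : ℝ)| • B)) :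
    (∀ r : ℝˣ, IsUnit (A r)) ∧ ∀ r s : ℝˣ, A (r * s) = A r * A s :=
  pair_gives_group_hom_general n B C hC2 hcomm A hA
end

section
/- Let G be the subgroup of ℝˣ generated by 2, i.e. G = { 2^k : k ∈ ℤ }, and let π : ℝˣ → ℝˣ/G be the quotient homomorphism. Define α : ℝˣ → ℝˣ/G by α(r) = π(r) if r > 0 and α(r) = π(√2·|r|) if r < 0. Then α is a group homomorphism, and there exists no group homomorphism A : ℝˣ → ℝˣ with π ∘ A = α. -/
/-- The subgroup of `ℝˣ` generated by `2`. -/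
noncomputable def twoSubgroup : Subgroup ℝˣ :=
  Subgroup.zpowers (Units.mk0 (2 : ℝ) (by norm_num))

/-- `√2` as a unit of `ℝ`. -/
noncomputable def sqrtTwoUnit : ℝˣ :=
  Units.mk0 (Real.sqrt 2) (by positivity)

/-- `|r|` as a unit of `ℝ`, for `r : ℝˣ`. -/
noncomputable def absUnit (r : ℝˣ) : ℝˣ :=
  Units.mk0 |(r : ℝ)| (abs_ne_zero.mpr r.ne_zero)

lemma mk_two_eq_one :
    (QuotientGroup.mk (Units.mk0 (2 : ℝ) (by norm_num)) : ℝˣ ⧸ twoSubgroup) = 1 :=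
  (QuotientGroup.eq_one_iff _).mpr (Subgroup.mem_zpowers _)

/-- The paper's counterexample (remark after Proposition 3.7): with
`G = {2^k : k ∈ ℤ} ≤ ℝˣ` and `π : ℝˣ → ℝˣ/G` the quotient map, the map
`α(r) = π(r)` for `r > 0`, `α(r) = π(√2·|r|)` for `r < 0` is a group
homomorphism admitting no lift to a group homomorphism `A : ℝˣ → ℝˣ`
with `π ∘ A = α`. -/
theorem no_lift_counterexample
    (α : ℝˣ → ℝˣ ⧸ twoSubgroup)
    (hα : ∀ r : ℝˣ, α r =
      if (0 : ℝ) < (r : ℝ) then QuotientGroup.mk r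
      else QuotientGroup.mk (sqrtTwoUnit * absUnit r)) :
    (∀ r s : ℝˣ, α (r * s) = α r * α s) ∧
      ¬ ∃ A : ℝˣ →* ℝˣ, ∀ r : ℝˣ, QuotientGroup.mk (A r) = α r := by
  have sqrt2_pos : (0 : ℝ) < Real.sqrt 2 := by positivity
  have sqrt2_sq : Real.sqrt 2 * Real.sqrt 2 = 2 :=
    Real.mul_self_sqrt (by norm_num)
  constructor
  · intro r s
    rw [hα, hα, hα]
    have hr0 : (r : ℝ) ≠ 0 := r.ne_zero
    have hs0 : (s : ℝ) ≠ 0 := s.ne_zero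
    rcases hr0.lt_or_gt with hr | hr <;> rcases hs0.lt_or_gt with hs | hs
    · -- both negative
      have hrs : (0:ℝ) < ((r*s : ℝˣ) : ℝ) := by
        rw [Units.val_mul]; exact mul_pos_of_neg_of_neg hr hs
      rw [if_pos hrs, if_neg (not_lt.mpr hr.le), if_neg (not_lt.mpr hs.le)]
      rw [← QuotientGroup.mk_mul]
      have key : (sqrtTwoUnit * absUnit r) * (sqrtTwoUnit * absUnit s)
          = Units.mk0 (2 : ℝ) (by norm_num) * (r * s) := by
        ext
        simp only [Units.val_mul, sqrtTwoUnit, absUnit, Units.val_mk0]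
        rw [abs_of_neg hr, abs_of_neg hs]; ring_nf
        rw [pow_two, sqrt2_sq]; ring
      conv_rhs => rw [key, QuotientGroup.mk_mul]
      rw [mk_two_eq_one]
      exact (one_mul (QuotientGroup.mk (r * s) : ℝˣ ⧸ twoSubgroup)).symm
    · -- r < 0, s > 0
      have hrs : ¬ (0:ℝ) < ((r*s : ℝˣ) : ℝ) := by
        rw [Units.val_mul]; exact not_lt.mpr (mul_nonpos_of_nonpos_of_nonneg hr.le hs.le)
      rw [if_neg hrs, if_neg (not_lt.mpr hr.le), if_pos hs, ← QuotientGroup.mk_mul]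
      congr 1
      ext
      simp only [Units.val_mul, sqrtTwoUnit, absUnit, Units.val_mk0]
      rw [abs_mul, abs_of_neg hr, abs_of_pos hs]; ring
    · -- r > 0, s < 0
      have hrs : ¬ (0:ℝ) < ((r*s : ℝˣ) : ℝ) := by
        rw [Units.val_mul]; exact not_lt.mpr (mul_nonpos_of_nonneg_of_nonpos hr.le hs.le)
      rw [if_neg hrs, if_pos hr, if_neg (not_lt.mpr hs.le), ← QuotientGroup.mk_mul]
      congr 1
      ext
      simp only [Units.val_mul, sqrtTwoUnit, absUnit, Units.val_mk0]
      rw [abs_mul, abs_of_pos hr, abs_of_neg hs]; ring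
    · -- both positive
      have hrs : (0:ℝ) < ((r*s : ℝˣ) : ℝ) := by
        rw [Units.val_mul]; exact mul_pos hr hs
      rw [if_pos hrs, if_pos hr, if_pos hs, QuotientGroup.mk_mul]
  · rintro ⟨A, hA⟩
    -- A (-1) squares to 1
    set u := A (-1) with hu
    have hsq : u * u = 1 := by
      rw [hu, ← map_mul, neg_mul, one_mul, neg_neg, map_one]
    have huval : (u : ℝ) = 1 ∨ (u : ℝ) = -1 := by
      have : (u : ℝ) * (u : ℝ) = 1 := by
        rw [← Units.val_mul, hsq, Units.val_one]
      rcases mul_self_eq_one_iff.mp this with h | h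
      · exact Or.inl h
      · exact Or.inr h
    have hαm : (QuotientGroup.mk u : ℝˣ ⧸ twoSubgroup)
        = QuotientGroup.mk (sqrtTwoUnit * absUnit (-1)) := by
      rw [hA, hα]
      norm_num
    rw [QuotientGroup.eq] at hαm
    obtain ⟨k, hk⟩ := hαm
    have hkval : ((u⁻¹ * (sqrtTwoUnit * absUnit (-1)) : ℝˣ) : ℝ)
        = (2 : ℝ) ^ k := by
      rw [← hk]
      simp [twoSubgroup, Units.val_zpow_eq_zpow_val]
    have habs : ((absUnit (-1) : ℝˣ) : ℝ) = 1 := by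
      simp [absUnit]
    have hval : ((u : ℝ))⁻¹ * Real.sqrt 2 = (2 : ℝ) ^ k := by
      rw [← hkval]
      simp [sqrtTwoUnit, habs, Units.val_mul]
    have h2k : (0:ℝ) < (2:ℝ) ^ k := by positivity
    have hsqrt_eq : Real.sqrt 2 = (2 : ℝ) ^ k := by
      rcases huval with h | h
      · rw [h] at hval; simpa using hval
      · rw [h] at hval
        exfalso
        have : -Real.sqrt 2 = (2:ℝ) ^ k := by
          rw [← hval]; ring
        linarith [this ▸ h2k]
    -- square both sides: 2 = 2^(2k), contradiction with 2 = 2^1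
    have h2 : (2 : ℝ) ^ (2 * k) = (2:ℝ) ^ (1 : ℤ) := by
      rw [two_mul, zpow_add₀ (by norm_num : (2:ℝ) ≠ 0), ← hsqrt_eq, sqrt2_sq]
      norm_num
    have := zpow_right_injective₀ (by norm_num : (0:ℝ) < 2) (by norm_num) h2
    omega
end

section
/- Let k ≥ 1 and let J ∈ M_{2k}(ℝ) be the block matrix J = [[0, I_k], [−I_k, 0]]. Let Sp_k = { A ∈ GL_{2k}(ℝ) : Aᵀ J A = J } be the symplectic group, a subgroup of GL_{2k}(ℝ). Then an invertible matrix B ∈ GL_{2k}(ℝ) lies in the normalizer N(Sp_k) of Sp_k in GL_{2k}(ℝ) if and only if there exists a nonzero real number r with Bᵀ J B = r·J. -/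
/-! If `B` normalizes `Sp_k`, every symplectic `A` also preserves the form `K = Bᵀ J B`, i.e.
`Aᵀ K A = K`. Applying this to the symplectic transvections `1 + c v (vᵀ J)` and comparing
`c = 1` with `c = -1` shows that `K v` is a multiple of `J v` for every `v`; hence every vector is
an eigenvector of `J⁻¹ K`, which is therefore a scalar `r`. Conversely the forms `J` and `r J`
with `r ≠ 0` have the same isometries. -/

open Matrix

/-- The standard symplectic matrix `J = [[0, I], [-I, 0]]`. -/
def symplJ (k : ℕ) : Matrix (Fin k ⊕ Fin k) (Fin k ⊕ Fin k) ℝ :=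
  Matrix.fromBlocks 0 1 (-1) 0

/-- The symplectic group `Sp_k = { A ∈ GL_{2k}(ℝ) : Aᵀ J A = J }` as a subgroup
of `GL_{2k}(ℝ)`. -/
def SpGroup (k : ℕ) : Subgroup (GL (Fin k ⊕ Fin k) ℝ) where
  carrier := {A | (A : Matrix (Fin k ⊕ Fin k) (Fin k ⊕ Fin k) ℝ)ᵀ * symplJ k *
    (A : Matrix (Fin k ⊕ Fin k) (Fin k ⊕ Fin k) ℝ) = symplJ k}
  one_mem' := by simp
  mul_mem' := by
    intro a b ha hb
    simp only [Set.mem_setOf_eq] at *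
    set M := (a : Matrix (Fin k ⊕ Fin k) (Fin k ⊕ Fin k) ℝ)
    set N := (b : Matrix (Fin k ⊕ Fin k) (Fin k ⊕ Fin k) ℝ)
    have : ((a * b : GL (Fin k ⊕ Fin k) ℝ) : Matrix (Fin k ⊕ Fin k) (Fin k ⊕ Fin k) ℝ)
        = M * N := rfl
    rw [this, Matrix.transpose_mul]
    calc Nᵀ * Mᵀ * symplJ k * (M * N) = Nᵀ * (Mᵀ * symplJ k * M) * N := by noncomm_ring
      _ = Nᵀ * symplJ k * N := by rw [ha]
      _ = symplJ k := hb
  inv_mem' := by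
    intro a ha
    simp only [Set.mem_setOf_eq] at *
    set M := (a : Matrix (Fin k ⊕ Fin k) (Fin k ⊕ Fin k) ℝ)
    set N := ((a⁻¹ : GL (Fin k ⊕ Fin k) ℝ) : Matrix (Fin k ⊕ Fin k) (Fin k ⊕ Fin k) ℝ)
    have hMN : M * N = 1 := a.mul_inv
    have h1 : Nᵀ * (Mᵀ * symplJ k * M) * N = (M * N)ᵀ * symplJ k * (M * N) := by
      rw [Matrix.transpose_mul]; noncomm_ring
    rw [ha, hMN] at h1
    simpa using h1

namespace Matrix

section Units

variable {n R : Type*} [Fintype n] [DecidableEq n] [CommRing R]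

lemma units_transpose_mul_mul_inj (B : (Matrix n n R)ˣ) {X Y : Matrix n n R} :
    (B : Matrix n n R)ᵀ * X * B = (B : Matrix n n R)ᵀ * Y * B ↔ X = Y := by
  refine ⟨fun h => ?_, fun h => h ▸ rfl⟩
  have hB : ∀ Z : Matrix n n R,
      (↑B⁻¹ : Matrix n n R)ᵀ * ((B : Matrix n n R)ᵀ * Z * B) * (↑B⁻¹ : Matrix n n R) = Z := by
    intro Z
    rw [← Matrix.mul_assoc, ← Matrix.mul_assoc, ← transpose_mul, Units.mul_inv, transpose_one,
      Matrix.one_mul, Matrix.mul_assoc, Units.mul_inv, Matrix.mul_one]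
  rw [← hB X, h, hB]

lemma units_conj_transpose_mul_mul_eq_iff (B : (Matrix n n R)ˣ) (A J : Matrix n n R) :
    (B * A * B⁻¹ : Matrix n n R)ᵀ * J * (B * A * B⁻¹ : Matrix n n R) = J ↔
      Aᵀ * ((B : Matrix n n R)ᵀ * J * B) * A = (B : Matrix n n R)ᵀ * J * B := by
  have hBinv : (↑B⁻¹ : Matrix n n R) * B = 1 := B.inv_mul
  have h : (B : Matrix n n R)ᵀ * ((B * A * B⁻¹ : Matrix n n R)ᵀ * J * (B * A * B⁻¹ : Matrix n n R))
      * B = Aᵀ * ((B : Matrix n n R)ᵀ * J * B) * A := by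
    simp only [transpose_mul, Matrix.mul_assoc, hBinv, Matrix.mul_one]
    rw [← Matrix.mul_assoc (B : Matrix n n R)ᵀ, ← transpose_mul, hBinv, transpose_one,
      Matrix.one_mul]
  rw [← units_transpose_mul_mul_inj B, h]

end Units

variable {ι 𝕜 : Type*} [Fintype ι] [DecidableEq ι] [Field 𝕜]

/-- The symplectic transvection `x ↦ x + c ω(v, x) v` of the form `ω(x, y) = xᵀ J y`. -/
def symplecticTransvection (J : Matrix ι ι 𝕜) (c : 𝕜) (v : ι → 𝕜) : Matrix ι ι 𝕜 :=
  1 + c • vecMulVec v (v ᵥ* J)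

omit [Fintype ι] [DecidableEq ι] in
lemma exists_eq_smul_of_vecMulVec_add_vecMulVec_eq_zero {w a b : ι → 𝕜} (hw : w ≠ 0)
    (h : vecMulVec w a + vecMulVec b w = 0) : ∃ c : 𝕜, b = c • w := by
  obtain ⟨j, hj⟩ := Function.ne_iff.mp hw
  refine ⟨-(a j / w j), funext fun i => ?_⟩
  have hij := congrFun (congrFun h i) j
  simp only [add_apply, vecMulVec_apply, zero_apply, Pi.zero_apply] at hij hj
  simp only [Pi.smul_apply, smul_eq_mul]
  field_simp
  linear_combination hij

lemma exists_eq_smul_one_of_forall_mulVec_eq_smul {M : Matrix ι ι 𝕜}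
    (h : ∀ v, ∃ c : 𝕜, M *ᵥ v = c • v) : ∃ r : 𝕜, M = r • 1 := by
  obtain ⟨r, hr⟩ := (toLin' M).exists_eq_smul_id_of_forall_notLinearIndependent fun v hv => by
    obtain ⟨c, hc⟩ := h v
    have := LinearIndependent.pair_iff.mp hv c (-1)
    simp_all
  refine ⟨r, ?_⟩
  simpa using congrArg LinearMap.toMatrix' hr

variable [NeZero (2 : 𝕜)] {J : Matrix ι ι 𝕜}

omit [DecidableEq ι] in
lemma dotProduct_mulVec_self_eq_zero_of_transpose_eq_neg (hJ : Jᵀ = -J) (v : ι → 𝕜) :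
    v ⬝ᵥ J *ᵥ v = 0 := by
  have h : v ⬝ᵥ J *ᵥ v = -(v ⬝ᵥ J *ᵥ v) := by
    conv_lhs => rw [dotProduct_mulVec, ← mulVec_transpose, hJ, neg_mulVec, neg_dotProduct,
      dotProduct_comm]
  have h2 : (2 : 𝕜) * (v ⬝ᵥ J *ᵥ v) = 0 := by linear_combination h
  exact (mul_eq_zero.mp h2).resolve_left two_ne_zero

lemma symplecticTransvection_add (hJ : Jᵀ = -J) (c d : 𝕜) (v : ι → 𝕜) :
    symplecticTransvection J (c + d) v =
      symplecticTransvection J c v * symplecticTransvection J d v := by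
  have hP : vecMulVec v (v ᵥ* J) * vecMulVec v (v ᵥ* J) = 0 := by
    rw [vecMulVec_mul_vecMulVec, ← dotProduct_mulVec,
      dotProduct_mulVec_self_eq_zero_of_transpose_eq_neg hJ, zero_smul, vecMulVec_zero]
  simp only [symplecticTransvection, add_mul, mul_add, one_mul, mul_one, smul_mul_smul_comm, hP,
    smul_zero, add_smul]
  abel

lemma isUnit_symplecticTransvection (hJ : Jᵀ = -J) (c : 𝕜) (v : ι → 𝕜) :
    IsUnit (symplecticTransvection J c v) :=
  IsUnit.of_mul_eq_one (symplecticTransvection J (-c) v) <| by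
    rw [← symplecticTransvection_add hJ, add_neg_cancel, symplecticTransvection, zero_smul,
      add_zero]

lemma transpose_mul_symplecticTransvection_mul (hJ : Jᵀ = -J) (c : 𝕜) (v : ι → 𝕜) :
    (symplecticTransvection J c v)ᵀ * J * symplecticTransvection J c v = J := by
  set w := v ᵥ* J
  set P := vecMulVec v w
  have hPJ : Pᵀ * J = vecMulVec w w := by rw [transpose_vecMulVec, vecMulVec_mul]
  have hJP : J * P = -vecMulVec w w := by
    rw [mul_vecMulVec, ← vecMul_transpose, hJ, vecMul_neg, neg_vecMulVec]
  have hPJP : Pᵀ * J * P = 0 := by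
    rw [hPJ, vecMulVec_mul_vecMulVec, ← dotProduct_mulVec,
      dotProduct_mulVec_self_eq_zero_of_transpose_eq_neg hJ, zero_smul, vecMulVec_zero]
  calc (1 + c • P)ᵀ * J * (1 + c • P)
        = J + c • (Pᵀ * J + J * P) + (c * c) • (Pᵀ * J * P) := by
          simp only [transpose_add, transpose_one, transpose_smul, add_mul, mul_add,
            Matrix.smul_mul, Matrix.mul_smul, one_mul, mul_one, smul_add, smul_smul,
            Matrix.mul_assoc]
          abel
    _ = J := by rw [hPJP, hPJ, hJP, add_neg_cancel, smul_zero, smul_zero, add_zero, add_zero]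

lemma transpose_mul_add_mul_eq_zero_of_forall {P K : Matrix ι ι 𝕜}
    (h : ∀ c : 𝕜, (1 + c • P)ᵀ * K * (1 + c • P) = K) : Pᵀ * K + K * P = 0 := by
  have h2 : (2 : 𝕜) • (Pᵀ * K + K * P) = (1 + (1 : 𝕜) • P)ᵀ * K * (1 + (1 : 𝕜) • P) -
      (1 + (-1 : 𝕜) • P)ᵀ * K * (1 + (-1 : 𝕜) • P) := by
    simp only [one_smul, neg_smul, two_smul, transpose_add, transpose_neg, transpose_one]
    noncomm_ring
  rw [h, h, sub_self, smul_eq_zero] at h2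
  exact h2.resolve_left two_ne_zero

theorem exists_eq_smul_of_forall_symplecticTransvection_invariant {K : Matrix ι ι 𝕜}
    (hJ : Jᵀ = -J) (hJu : IsUnit J)
    (hK : ∀ c v, (symplecticTransvection J c v)ᵀ * K * symplecticTransvection J c v = K) :
    ∃ r : 𝕜, K = r • J := by
  obtain ⟨U, rfl⟩ := hJu
  have hKv : ∀ v, ∃ c : 𝕜, K *ᵥ v = c • (↑U *ᵥ v) := by
    intro v
    rcases eq_or_ne v 0 with rfl | hv
    · exact ⟨0, by simp⟩
    have hw : v ᵥ* (U : Matrix ι ι 𝕜) ≠ 0 := fun h => hv <| by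
      rw [← vecMul_one v, ← U.mul_inv, ← vecMul_vecMul, h, zero_vecMul]
    have hP := transpose_mul_add_mul_eq_zero_of_forall fun c => hK c v
    rw [transpose_vecMulVec, vecMulVec_mul, mul_vecMulVec] at hP
    obtain ⟨c, hc⟩ := exists_eq_smul_of_vecMulVec_add_vecMulVec_eq_zero hw hP
    refine ⟨-c, ?_⟩
    rw [hc, ← vecMul_transpose, hJ, vecMul_neg, smul_neg, neg_smul, neg_neg]
  obtain ⟨r, hr⟩ := exists_eq_smul_one_of_forall_mulVec_eq_smul (M := (↑U⁻¹ : Matrix ι ι 𝕜) * K)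
    fun v => by
      obtain ⟨c, hc⟩ := hKv v
      exact ⟨c, by rw [← mulVec_mulVec, hc, mulVec_smul, mulVec_mulVec, Units.inv_mul, one_mulVec]⟩
  refine ⟨r, ?_⟩
  rw [← Units.mul_inv_cancel_left U K, hr, Matrix.mul_smul, mul_one]

end Matrix

lemma symplJ_transpose (k : ℕ) : (symplJ k)ᵀ = -symplJ k := by
  rw [symplJ, fromBlocks_transpose, fromBlocks_neg]
  simp

lemma symplJ_mul_self (k : ℕ) : symplJ k * symplJ k = -1 := by
  rw [symplJ, fromBlocks_multiply, ← fromBlocks_one, fromBlocks_neg]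
  simp

lemma isUnit_symplJ (k : ℕ) : IsUnit (symplJ k) :=
  IsUnit.of_mul_eq_one (-symplJ k) (by rw [mul_neg, symplJ_mul_self, neg_neg])

theorem mem_normalizer_sp_iff_general (k : ℕ) (B : GL (Fin k ⊕ Fin k) ℝ) :
    B ∈ Subgroup.normalizer (SpGroup k : Set (GL (Fin k ⊕ Fin k) ℝ)) ↔
      ∃ r : ℝ, r ≠ 0 ∧
        (B : Matrix (Fin k ⊕ Fin k) (Fin k ⊕ Fin k) ℝ)ᵀ * symplJ k *
          (B : Matrix (Fin k ⊕ Fin k) (Fin k ⊕ Fin k) ℝ) = r • symplJ k := by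
  set K := (B : Matrix (Fin k ⊕ Fin k) (Fin k ⊕ Fin k) ℝ)ᵀ * symplJ k * B
  have hconj : ∀ A : GL (Fin k ⊕ Fin k) ℝ, B * A * B⁻¹ ∈ SpGroup k ↔
      (A : Matrix (Fin k ⊕ Fin k) (Fin k ⊕ Fin k) ℝ)ᵀ * K * A = K :=
    fun A => units_conj_transpose_mul_mul_eq_iff B A (symplJ k)
  rw [Subgroup.mem_normalizer_iff]
  constructor
  · intro hB
    have hK : ∀ c v, (symplecticTransvection (symplJ k) c v)ᵀ * K *
        symplecticTransvection (symplJ k) c v = K := fun c v => by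
      let T := (isUnit_symplecticTransvection (symplJ_transpose k) c v).unit
      exact (hconj T).mp <| (hB T).mp <|
        transpose_mul_symplecticTransvection_mul (symplJ_transpose k) c v
    obtain ⟨r, hr⟩ := exists_eq_smul_of_forall_symplecticTransvection_invariant
      (symplJ_transpose k) (isUnit_symplJ k) hK
    rcases eq_or_ne r 0 with rfl | hr0
    · -- `r = 0` forces `J = 0`, i.e. `k = 0`, where any `r` works
      have hJ : symplJ k = 0 := (units_transpose_mul_mul_inj B).mp <| by
        rw [Matrix.mul_zero, Matrix.zero_mul]
        exact hr.trans (zero_smul ℝ _)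
      exact ⟨1, one_ne_zero, by rw [hr, hJ, smul_zero, smul_zero]⟩
    · exact ⟨r, hr0, hr⟩
  · rintro ⟨r, hr0, hr⟩ A
    rw [hconj, hr, Matrix.mul_smul, Matrix.smul_mul, smul_right_inj hr0]
    rfl

/-- Characterization of the normalizer of the symplectic group (paper's Lemma
5.2, after Sirola): `B ∈ N(Sp_k)` iff `Bᵀ J B = r·J` for some nonzero real `r`. -/
theorem mem_normalizer_sp_iff (k : ℕ) (hk : 1 ≤ k) (B : GL (Fin k ⊕ Fin k) ℝ) :
    B ∈ Subgroup.normalizer (SpGroup k : Set (GL (Fin k ⊕ Fin k) ℝ)) ↔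
      ∃ r : ℝ, r ≠ 0 ∧
        (B : Matrix (Fin k ⊕ Fin k) (Fin k ⊕ Fin k) ℝ)ᵀ * symplJ k *
          (B : Matrix (Fin k ⊕ Fin k) (Fin k ⊕ Fin k) ℝ) = r • symplJ k :=
  mem_normalizer_sp_iff_general k B
end

section
/- Let k ≥ 1, J = [[0, I_k], [−I_k, 0]] ∈ M_{2k}(ℝ), and Sp_k = { A ∈ GL_{2k}(ℝ) : Aᵀ J A = J }. For every B in the normalizer N(Sp_k) of Sp_k in GL_{2k}(ℝ), there is a unique nonzero real number p(B) with Bᵀ J B = p(B)·J, and the resulting map p : N(Sp_k) → ℝˣ is a surjective group homomorphism whose kernel is exactly Sp_k. -/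
open Matrix

/-!
If `B` normalizes `Sp`, then the form `Bᵀ J B` is again `Sp`-invariant. Invariance under the
transvections `[[1, E], [0, 1]]` and `[[1, 0], [E, 1]]` with `E` symmetric already forces an
invariant form to be a multiple `r • J`: its diagonal blocks vanish and its off-diagonal block
commutes with every symmetric matrix, hence is scalar. As `B` is invertible, `r ≠ 0`. Conversely
every similitude (`Bᵀ J B = r • J` with `r` a unit) normalizes `Sp`, so the normalizer is the
similitude group of `J`; its multiplier is a homomorphism with kernel `Sp`, and `diag(r I, I)` has
multiplier `r`.
-/

namespace Matrix

variable {n R : Type*} [Fintype n] [CommRing R]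

theorem transpose_mul_mul_mul_assoc (A B M : Matrix n n R) :
    (A * B)ᵀ * M * (A * B) = Bᵀ * (Aᵀ * M * A) * B := by
  simp only [transpose_mul, Matrix.mul_assoc]

theorem transpose_mul_mul_mul_eq_smul {A B J : Matrix n n R} {r s : R}
    (hA : Aᵀ * J * A = r • J) (hB : Bᵀ * J * B = s • J) :
    (A * B)ᵀ * J * (A * B) = (r * s) • J := by
  rw [transpose_mul_mul_mul_assoc, hA, Matrix.mul_smul, Matrix.smul_mul, hB, smul_smul]

variable [DecidableEq n]

theorem mem_range_scalar_of_commute_isSymm {P : Matrix n n R}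
    (hP : ∀ E : Matrix n n R, E.IsSymm → Commute E P) : P ∈ Set.range (scalar n) := by
  refine mem_range_scalar_of_commute_single fun i j hij => ?_
  have hsum : (single i j (1 : R) + single j i 1).IsSymm := by
    simpa [transpose_single] using isSymm_add_transpose_self (single i j (1 : R))
  have hii : (single i i (1 : R)).IsSymm := by simp [IsSymm, transpose_single]
  have hprod : single i i (1 : R) * (single i j 1 + single j i 1) = single i j 1 := by
    rw [mul_add, single_mul_single_same, single_mul_single_of_ne _ _ _ _ hij, one_mul, add_zero]
  simpa [hprod] using (hP _ hii).mul_left (hP _ hsum)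

theorem exists_eq_smul_of_transvection_invariant {M : Matrix (n ⊕ n) (n ⊕ n) R}
    (hupper : ∀ E : Matrix n n R, E.IsSymm →
      (fromBlocks 1 E 0 1)ᵀ * M * fromBlocks 1 E 0 1 = M)
    (hlower : ∀ E : Matrix n n R, E.IsSymm →
      (fromBlocks 1 0 E 1)ᵀ * M * fromBlocks 1 0 E 1 = M) :
    ∃ r : R, M = r • fromBlocks 0 1 (-1) 0 := by
  obtain ⟨P, Q, C, D, rfl⟩ : ∃ P Q C D, M = fromBlocks P Q C D :=
    ⟨_, _, _, _, (fromBlocks_toBlocks M).symm⟩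
  have hupper' : ∀ E : Matrix n n R, E.IsSymm →
      P * E = 0 ∧ E * P = 0 ∧ (E * P + C) * E + (E * Q + D) = D := by
    intro E hE
    simpa [fromBlocks_transpose, fromBlocks_multiply, hE.eq] using hupper E hE
  have hD : D = 0 := by
    have := hlower 1 isSymm_one
    simp only [fromBlocks_transpose, fromBlocks_multiply, fromBlocks_inj] at this
    simpa using this.2.2.1
  have hP : P = 0 := by simpa using (hupper' 1 isSymm_one).1
  have hCQ : ∀ E : Matrix n n R, E.IsSymm → C * E + E * Q = 0 := fun E hE => by
    simpa [hP, ← add_assoc] using (hupper' E hE).2.2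
  have hC : C = -Q := eq_neg_of_add_eq_zero_left (by simpa using hCQ 1 isSymm_one)
  obtain ⟨r, rfl⟩ := mem_range_scalar_of_commute_isSymm (P := Q) fun E hE =>
    (neg_add_eq_zero.mp (by simpa [hC] using hCQ E hE)).symm
  refine ⟨r, ?_⟩
  simp [hP, hC, hD, fromBlocks_smul, smul_one_eq_diagonal]

theorem GeneralLinearGroup.transpose_inv_mul_mul_inv_eq_smul {J : Matrix n n R} {B : GL n R}
    {r : Rˣ} (hB : (B : Matrix n n R)ᵀ * J * B = (r : R) • J) :
    ((B⁻¹ : GL n R) : Matrix n n R)ᵀ * J * (B⁻¹ : GL n R) = ((r⁻¹ : Rˣ) : R) • J := by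
  set C := ((B⁻¹ : GL n R) : Matrix n n R)
  have hJ : J = (r : R) • (Cᵀ * J * C) := calc
    J = ((B : Matrix n n R) * C)ᵀ * J * (B * C) := by rw [B.mul_inv]; simp
    _ = Cᵀ * ((r : R) • J) * C := by rw [transpose_mul_mul_mul_assoc, hB]
    _ = (r : R) • (Cᵀ * J * C) := by rw [Matrix.mul_smul, Matrix.smul_mul]
  conv_rhs => rw [hJ, smul_smul, ← Units.val_mul, inv_mul_cancel, Units.val_one, one_smul]

theorem GeneralLinearGroup.transpose_mul_mul_eq_zero_iff {B : GL n R} {M : Matrix n n R} :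
    (B : Matrix n n R)ᵀ * M * B = 0 ↔ M = 0 := by
  refine ⟨fun h => ?_, fun h => by simp [h]⟩
  simpa [B.mul_inv, h] using transpose_mul_mul_mul_assoc (B : Matrix n n R) (B⁻¹ : GL n R) M

def similitudeGroup (J : Matrix n n R) : Subgroup (GL n R) where
  carrier := {B | ∃ r : Rˣ, (B : Matrix n n R)ᵀ * J * B = (r : R) • J}
  one_mem' := ⟨1, by simp⟩
  mul_mem' := by
    rintro A B ⟨r, hA⟩ ⟨s, hB⟩
    exact ⟨r * s, by simpa using transpose_mul_mul_mul_eq_smul hA hB⟩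
  inv_mem' := by
    rintro B ⟨r, hB⟩
    exact ⟨r⁻¹, GeneralLinearGroup.transpose_inv_mul_mul_inv_eq_smul hB⟩

theorem transpose_mul_mul_conj_eq_of_mem_similitudeGroup {J : Matrix n n R} {B A : GL n R}
    (hB : B ∈ similitudeGroup J) (hA : (A : Matrix n n R)ᵀ * J * A = J) :
    ((B * A * B⁻¹ : GL n R) : Matrix n n R)ᵀ * J * (B * A * B⁻¹ : GL n R) = J := by
  obtain ⟨r, hr⟩ := hB
  have hBA : ((B * A : GL n R) : Matrix n n R)ᵀ * J * (B * A : GL n R) = (r * 1 : R) • J :=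
    transpose_mul_mul_mul_eq_smul hr (by rwa [one_smul])
  simpa [smul_smul] using transpose_mul_mul_mul_eq_smul hBA
    (GeneralLinearGroup.transpose_inv_mul_mul_inv_eq_smul hr)

namespace similitudeGroup

variable {J : Matrix n n R}

theorem multiplier_unique (hJ : Function.Injective fun r : R => r • J) {B : GL n R} {r s : Rˣ}
    (hr : (B : Matrix n n R)ᵀ * J * B = (r : R) • J)
    (hs : (B : Matrix n n R)ᵀ * J * B = (s : R) • J) : r = s :=
  Units.ext (hJ (hr.symm.trans hs))

variable (hJ : Function.Injective fun r : R => r • J)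

noncomputable def multiplier : similitudeGroup J →* Rˣ where
  toFun B := B.2.choose
  map_one' := multiplier_unique hJ (one_mem (similitudeGroup J)).choose_spec (by simp)
  map_mul' A B := multiplier_unique hJ (mul_mem A.2 B.2).choose_spec <| by
    simpa using transpose_mul_mul_mul_eq_smul A.2.choose_spec B.2.choose_spec

theorem multiplier_eq_iff {B : similitudeGroup J} {r : Rˣ} :
    multiplier hJ B = r ↔ ((B : GL n R) : Matrix n n R)ᵀ * J * (B : GL n R) = (r : R) • J :=
  ⟨fun h => h ▸ B.2.choose_spec, multiplier_unique hJ B.2.choose_spec⟩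

end similitudeGroup

def upperTransvection (E : Matrix n n R) : GL (n ⊕ n) R :=
  ⟨fromBlocks 1 E 0 1, fromBlocks 1 (-E) 0 1, by simp [fromBlocks_multiply],
    by simp [fromBlocks_multiply]⟩

@[simp]
theorem coe_upperTransvection (E : Matrix n n R) :
    (upperTransvection E : Matrix (n ⊕ n) (n ⊕ n) R) = fromBlocks 1 E 0 1 :=
  rfl

def lowerTransvection (E : Matrix n n R) : GL (n ⊕ n) R :=
  ⟨fromBlocks 1 0 E 1, fromBlocks 1 0 (-E) 1, by simp [fromBlocks_multiply],
    by simp [fromBlocks_multiply]⟩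

@[simp]
theorem coe_lowerTransvection (E : Matrix n n R) :
    (lowerTransvection E : Matrix (n ⊕ n) (n ⊕ n) R) = fromBlocks 1 0 E 1 :=
  rfl

def blockDilation (r : Rˣ) : GL (n ⊕ n) R :=
  ⟨fromBlocks ((r : R) • 1) 0 0 1, fromBlocks (((r⁻¹ : Rˣ) : R) • 1) 0 0 1,
    by simp [fromBlocks_multiply, smul_smul], by simp [fromBlocks_multiply, smul_smul]⟩

theorem transpose_blockDilation_mul_mul (r : Rˣ) :
    ((blockDilation r : GL (n ⊕ n) R) : Matrix (n ⊕ n) (n ⊕ n) R)ᵀ * fromBlocks 0 1 (-1) 0 *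
      ((blockDilation r : GL (n ⊕ n) R) : Matrix (n ⊕ n) (n ⊕ n) R) =
        (r : R) • fromBlocks 0 1 (-1) 0 := by
  simp [blockDilation, fromBlocks_transpose, fromBlocks_multiply, fromBlocks_smul]

end Matrix

variable {k : ℕ}

theorem upperTransvection_mem_SpGroup {E : Matrix (Fin k) (Fin k) ℝ} (hE : E.IsSymm) :
    upperTransvection E ∈ SpGroup k := by
  simp [SpGroup, symplJ, upperTransvection, fromBlocks_transpose, fromBlocks_multiply, hE.eq]

theorem lowerTransvection_mem_SpGroup {E : Matrix (Fin k) (Fin k) ℝ} (hE : E.IsSymm) :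
    lowerTransvection E ∈ SpGroup k := by
  simp [SpGroup, symplJ, lowerTransvection, fromBlocks_transpose, fromBlocks_multiply, hE.eq]

theorem smul_symplJ_injective (hk : 1 ≤ k) : Function.Injective fun r : ℝ => r • symplJ k := by
  intro r s h
  simpa [symplJ] using congrFun₂ h (Sum.inl ⟨0, hk⟩) (Sum.inr ⟨0, hk⟩)

theorem transpose_mul_mul_mul_eq_of_mem_normalizer {B A : GL (Fin k ⊕ Fin k) ℝ}
    (hB : B ∈ Subgroup.normalizer (SpGroup k : Set (GL (Fin k ⊕ Fin k) ℝ))) (hA : A ∈ SpGroup k) :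
    (A : Matrix (Fin k ⊕ Fin k) (Fin k ⊕ Fin k) ℝ)ᵀ *
        ((B : Matrix (Fin k ⊕ Fin k) (Fin k ⊕ Fin k) ℝ)ᵀ * symplJ k * B) * A =
      (B : Matrix (Fin k ⊕ Fin k) (Fin k ⊕ Fin k) ℝ)ᵀ * symplJ k * B := by
  have hA' : B * A * B⁻¹ ∈ SpGroup k := (Subgroup.mem_normalizer_iff.mp hB A).mp hA
  have hBA : B * A = B * A * B⁻¹ * B := by group
  rw [← transpose_mul_mul_mul_assoc, ← Units.val_mul, hBA, Units.val_mul,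
    transpose_mul_mul_mul_assoc, hA']

theorem normalizer_SpGroup_le_similitudeGroup (hk : 1 ≤ k) :
    Subgroup.normalizer (SpGroup k : Set (GL (Fin k ⊕ Fin k) ℝ)) ≤ similitudeGroup (symplJ k) := by
  intro B hB
  obtain ⟨r, hr⟩ : ∃ r : ℝ, (B : Matrix (Fin k ⊕ Fin k) (Fin k ⊕ Fin k) ℝ)ᵀ * symplJ k * B =
      r • symplJ k := by
    apply exists_eq_smul_of_transvection_invariant
    · intro E hE
      simpa only [coe_upperTransvection] using
        transpose_mul_mul_mul_eq_of_mem_normalizer hB (upperTransvection_mem_SpGroup hE)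
    · intro E hE
      simpa only [coe_lowerTransvection] using
        transpose_mul_mul_mul_eq_of_mem_normalizer hB (lowerTransvection_mem_SpGroup hE)
  have hr0 : r ≠ 0 := by
    rintro rfl
    have hJ : symplJ k = 0 :=
      GeneralLinearGroup.transpose_mul_mul_eq_zero_iff.mp (by rw [hr, zero_smul])
    exact one_ne_zero (smul_symplJ_injective hk (by simp [hJ]))
  exact ⟨Units.mk0 r hr0, hr⟩

theorem normalizer_SpGroup_eq_similitudeGroup (hk : 1 ≤ k) :
    Subgroup.normalizer (SpGroup k : Set (GL (Fin k ⊕ Fin k) ℝ)) = similitudeGroup (symplJ k) :=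
  le_antisymm (normalizer_SpGroup_le_similitudeGroup hk) <|
    Subgroup.le_normalizer_iff.mpr fun _ hB _ hA => transpose_mul_mul_conj_eq_of_mem_similitudeGroup hB hA

/-- Exactness part of the paper's Lemma 5.2 (lem:N(Sp)): each `B ∈ N(Sp_k)`
satisfies `Bᵀ J B = p(B)·J` for a unique nonzero real `p(B)`, and the resulting
map `p : N(Sp_k) → ℝˣ` is a surjective group homomorphism with kernel `Sp_k`. -/
theorem sp_normalizer_exact_sequence (k : ℕ) (hk : 1 ≤ k) :
    (∀ B : (Subgroup.normalizer (SpGroup k : Set (GL (Fin k ⊕ Fin k) ℝ))),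
      ∃! r : ℝˣ,
        ((B : GL (Fin k ⊕ Fin k) ℝ) : Matrix (Fin k ⊕ Fin k) (Fin k ⊕ Fin k) ℝ)ᵀ * symplJ k *
          ((B : GL (Fin k ⊕ Fin k) ℝ) : Matrix (Fin k ⊕ Fin k) (Fin k ⊕ Fin k) ℝ)
            = (r : ℝ) • symplJ k) ∧
    ∃ p : (Subgroup.normalizer (SpGroup k : Set (GL (Fin k ⊕ Fin k) ℝ))) →* ℝˣ,
      (∀ B : (Subgroup.normalizer (SpGroup k : Set (GL (Fin k ⊕ Fin k) ℝ))),
        ((B : GL (Fin k ⊕ Fin k) ℝ) : Matrix (Fin k ⊕ Fin k) (Fin k ⊕ Fin k) ℝ)ᵀ * symplJ k *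
          ((B : GL (Fin k ⊕ Fin k) ℝ) : Matrix (Fin k ⊕ Fin k) (Fin k ⊕ Fin k) ℝ)
            = (p B : ℝ) • symplJ k) ∧
      Function.Surjective p ∧
      ∀ B : (Subgroup.normalizer (SpGroup k : Set (GL (Fin k ⊕ Fin k) ℝ))), p B = 1 ↔ (B : GL (Fin k ⊕ Fin k) ℝ) ∈ SpGroup k := by
  have hN := normalizer_SpGroup_eq_similitudeGroup hk
  let p := (similitudeGroup.multiplier (smul_symplJ_injective hk)).comp (Subgroup.inclusion hN.le)
  have hp : ∀ B r, p B = r ↔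
      ((B : GL (Fin k ⊕ Fin k) ℝ) : Matrix (Fin k ⊕ Fin k) (Fin k ⊕ Fin k) ℝ)ᵀ * symplJ k *
        (B : GL (Fin k ⊕ Fin k) ℝ) = (r : ℝ) • symplJ k := fun _ _ =>
    similitudeGroup.multiplier_eq_iff (smul_symplJ_injective hk)
  refine ⟨fun B => ⟨p B, (hp B _).1 rfl, fun r hr => ((hp B r).2 hr).symm⟩,
    p, fun B => (hp B _).1 rfl, fun r => ?_, fun B => by rw [hp, Units.val_one, one_smul]; rfl⟩
  have hr := transpose_blockDilation_mul_mul (n := Fin k) r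
  exact ⟨⟨blockDilation r, hN.ge ⟨r, hr⟩⟩, (hp _ r).2 hr⟩
end

section
/- Let n ≥ 0 and let O_{n+1} = { A ∈ GL_{n+1}(ℝ) : Aᵀ A = I } be the orthogonal group, a subgroup of GL_{n+1}(ℝ). Then an invertible matrix B ∈ GL_{n+1}(ℝ) lies in the normalizer N(O_{n+1}) of O_{n+1} in GL_{n+1}(ℝ) if and only if there exists a real number r > 0 with Bᵀ B = r·I. -/
/-!
If `Bᵀ B = r • 1` then `Bᵀ = r • B⁻¹`, so conjugation by `B` commutes with transposition and
therefore preserves the equation `Aᵀ A = 1`. Conversely, if `B` normalizes the orthogonal group,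
then `S = Bᵀ B` satisfies `Aᵀ S A = S`, i.e. commutes with every orthogonal `A`. Commuting with
the coordinate reflections kills the off-diagonal entries of `S`, commuting with the
transposition matrices equalizes its diagonal entries, and the resulting scalar is positive
because `S` is positive definite.
-/

open Matrix

/-- The orthogonal group `O_{n+1} = { A ∈ GL_{n+1}(ℝ) : Aᵀ A = I }` as a
subgroup of `GL_{n+1}(ℝ)`. -/
def OGroup (n : ℕ) : Subgroup (GL (Fin (n + 1)) ℝ) where
  carrier := {A | (A : Matrix (Fin (n + 1)) (Fin (n + 1)) ℝ)ᵀ *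
    (A : Matrix (Fin (n + 1)) (Fin (n + 1)) ℝ) = 1}
  one_mem' := by simp
  mul_mem' := by
    intro a b ha hb
    simp only [Set.mem_setOf_eq] at *
    set M := (a : Matrix (Fin (n + 1)) (Fin (n + 1)) ℝ)
    set N := (b : Matrix (Fin (n + 1)) (Fin (n + 1)) ℝ)
    have : ((a * b : GL (Fin (n + 1)) ℝ) : Matrix (Fin (n + 1)) (Fin (n + 1)) ℝ)
        = M * N := rfl
    rw [this, Matrix.transpose_mul]
    calc Nᵀ * Mᵀ * (M * N) = Nᵀ * (Mᵀ * M) * N := by noncomm_ring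
      _ = Nᵀ * N := by rw [ha, mul_one]
      _ = 1 := hb
  inv_mem' := by
    intro a ha
    simp only [Set.mem_setOf_eq] at *
    set M := (a : Matrix (Fin (n + 1)) (Fin (n + 1)) ℝ)
    set N := ((a⁻¹ : GL (Fin (n + 1)) ℝ) : Matrix (Fin (n + 1)) (Fin (n + 1)) ℝ)
    have hMN : M * N = 1 := a.mul_inv
    have hNM : N * M = 1 := a.inv_mul
    -- from `Mᵀ M = 1` and invertibility, `N = Mᵀ`
    have hN : N = Mᵀ := by
      calc N = (Mᵀ * M) * N := by rw [ha, one_mul]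
        _ = Mᵀ * (M * N) := by rw [mul_assoc]
        _ = Mᵀ := by rw [hMN, mul_one]
    rw [hN, Matrix.transpose_transpose]
    calc M * Mᵀ = M * N := by rw [hN]
      _ = 1 := hMN

namespace Matrix

variable {m R : Type*} [Fintype m] [DecidableEq m]

section Semiring

variable [Semiring R]

lemma diag_eq_of_commute_swap {S : Matrix m m R} {i j : m} (h : Commute S (swap R i j)) :
    S i i = S j j := by
  simpa using congrFun (congrFun h.eq i) j

lemma transpose_diagonal_mul_diagonal_of_mul_self_eq_one {d : m → R} (hd : ∀ k, d k * d k = 1) :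
    (diagonal d)ᵀ * diagonal d = 1 := by
  rw [diagonal_transpose, diagonal_mul_diagonal, ← diagonal_one]
  exact congrArg diagonal (funext hd)

end Semiring

section Scalar

variable [CommRing R] {S : Matrix m m R}

lemma apply_eq_zero_of_commute_diagonal [NoZeroDivisors R] {d : m → R}
    (h : Commute S (diagonal d)) {i j : m} (hij : d i ≠ d j) : S i j = 0 := by
  have hij' : S i j * d j = d i * S i j := by
    simpa using congrFun (congrFun h.eq i) j
  have : S i j * (d j - d i) = 0 := by rw [mul_sub, hij', mul_comm, sub_self]
  exact (mul_eq_zero.mp this).resolve_right (sub_ne_zero.mpr hij.symm)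

lemma mem_range_scalar_of_forall_commute_orthogonal [IsDomain R] (hR : ringChar R ≠ 2)
    (hS : ∀ A : Matrix m m R, Aᵀ * A = 1 → Commute S A) : S ∈ Set.range (scalar m) := by
  cases isEmpty_or_nonempty m
  · exact ⟨0, Subsingleton.elim _ _⟩
  obtain ⟨i₀⟩ := ‹Nonempty m›
  refine ⟨S i₀ i₀, Matrix.ext fun i j => ?_⟩
  obtain rfl | hij := eq_or_ne i j
  · rw [scalar_apply, diagonal_apply_eq]
    exact diag_eq_of_commute_swap (hS _ (by rw [transpose_swap, swap_mul_self]))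
  · rw [scalar_apply, diagonal_apply_ne _ hij]
    let d : m → R := fun k => if k = j then -1 else 1
    refine (apply_eq_zero_of_commute_diagonal (d := d)
      (hS _ (transpose_diagonal_mul_diagonal_of_mul_self_eq_one fun k => ?_)) ?_).symm
    · by_cases hk : k = j <;> simp [d, hk]
    · simpa [d, hij] using (Ring.neg_one_ne_one_of_char_ne_two hR).symm

end Scalar

section Conformal

variable [CommRing R] {B : Matrix m m R} [Invertible B] {r : R}

lemma transpose_eq_smul_invOf_of_transpose_mul_self_eq (hB : Bᵀ * B = r • 1) :
    Bᵀ = r • ⅟B := by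
  rw [← mul_invOf_cancel_right (a := Bᵀ) (b := B), hB, smul_mul_assoc, one_mul]

lemma transpose_conj_of_transpose_mul_self_eq (hB : Bᵀ * B = r • 1) (A : Matrix m m R) :
    (B * A * ⅟B)ᵀ = B * Aᵀ * ⅟B := by
  have hBt := transpose_eq_smul_invOf_of_transpose_mul_self_eq hB
  have hB' : B = r • (⅟B)ᵀ := by rw [← transpose_smul, ← hBt, transpose_transpose]
  calc (B * A * ⅟B)ᵀ = r • (⅟B)ᵀ * Aᵀ * ⅟B := by
        rw [transpose_mul, transpose_mul, hBt]
        simp only [mul_smul_comm, smul_mul_assoc, mul_assoc]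
    _ = B * Aᵀ * ⅟B := by rw [← hB']

lemma transpose_mul_self_conj_eq_one_iff (hB : Bᵀ * B = r • 1) {A : Matrix m m R} :
    (B * A * ⅟B)ᵀ * (B * A * ⅟B) = 1 ↔ Aᵀ * A = 1 := by
  have hconj : (B * A * ⅟B)ᵀ * (B * A * ⅟B) = B * (Aᵀ * A) * ⅟B := by
    rw [transpose_conj_of_transpose_mul_self_eq hB]
    simp only [mul_assoc, invOf_mul_cancel_left]
  rw [hconj]
  constructor
  · intro h
    simpa [mul_assoc] using congrArg (fun X => ⅟B * X * B) h
  · intro h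
    rw [h, mul_one, mul_invOf_self]

lemma commute_transpose_mul_self_of_transpose_mul_self_conj_eq_one {A : Matrix m m R}
    (hA : Aᵀ * A = 1) (h : (B * A * ⅟B)ᵀ * (B * A * ⅟B) = 1) : Commute (Bᵀ * B) A := by
  have hBt : Bᵀ * (⅟B)ᵀ = 1 := by rw [← transpose_mul, invOf_mul_self, transpose_one]
  have hinvariant : Aᵀ * (Bᵀ * B) * A = Bᵀ * B :=
    calc Aᵀ * (Bᵀ * B) * A = (Bᵀ * (⅟B)ᵀ) * Aᵀ * (Bᵀ * B) * A * (⅟B * B) := by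
          rw [hBt, invOf_mul_self, one_mul, mul_one]
      _ = Bᵀ * ((B * A * ⅟B)ᵀ * (B * A * ⅟B)) * B := by
          simp only [transpose_mul]; noncomm_ring
      _ = Bᵀ * B := by rw [h, mul_one]
  calc Bᵀ * B * A = A * (Aᵀ * (Bᵀ * B) * A) := by
        rw [← mul_assoc, ← mul_assoc, mul_eq_one_comm.mp hA, one_mul]
    _ = A * (Bᵀ * B) := by rw [hinvariant]

end Conformal

lemma pos_of_transpose_mul_self_eq_smul_one [Nonempty m] {B : Matrix m m ℝ} (hB : IsUnit B)
    {r : ℝ} (h : Bᵀ * B = r • 1) : 0 < r := by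
  have hpos := (PosDef.conjTranspose_mul_self B (mulVec_injective_iff_isUnit.mpr hB)).diag_pos
    (i := Classical.arbitrary m)
  rwa [conjTranspose_eq_transpose_of_trivial, h, smul_apply, one_apply_eq, smul_eq_mul,
    mul_one] at hpos

end Matrix

section Normalizer

variable {n : ℕ} {B : GL (Fin (n + 1)) ℝ}

lemma mem_OGroup_iff {A : GL (Fin (n + 1)) ℝ} :
    A ∈ OGroup n ↔ (A : Matrix (Fin (n + 1)) (Fin (n + 1)) ℝ)ᵀ * A = 1 :=
  Iff.rfl

lemma mem_normalizer_OGroup_of_transpose_mul_self_eq {r : ℝ}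
    (hB : (B : Matrix (Fin (n + 1)) (Fin (n + 1)) ℝ)ᵀ * B = r • 1) :
    B ∈ Subgroup.normalizer (OGroup n : Set (GL (Fin (n + 1)) ℝ)) := by
  let := B.invertible
  refine Subgroup.mem_normalizer_iff.mpr fun A => ?_
  rw [mem_OGroup_iff, mem_OGroup_iff, Units.val_mul, Units.val_mul, ← invOf_units,
    transpose_mul_self_conj_eq_one_iff hB]

lemma commute_transpose_mul_self_of_mem_normalizer_OGroup
    (hB : B ∈ Subgroup.normalizer (OGroup n : Set (GL (Fin (n + 1)) ℝ)))
    {A : Matrix (Fin (n + 1)) (Fin (n + 1)) ℝ} (hA : Aᵀ * A = 1) :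
    Commute ((B : Matrix (Fin (n + 1)) (Fin (n + 1)) ℝ)ᵀ * B) A := by
  let := B.invertible
  let A' : GL (Fin (n + 1)) ℝ := ⟨A, Aᵀ, mul_eq_one_comm.mp hA, hA⟩
  have hconj : B * A' * B⁻¹ ∈ OGroup n := (Subgroup.mem_normalizer_iff.mp hB A').mp hA
  rw [mem_OGroup_iff, Units.val_mul, Units.val_mul, ← invOf_units] at hconj
  exact commute_transpose_mul_self_of_transpose_mul_self_conj_eq_one hA hconj

end Normalizer

/-- Characterization of the normalizer of the orthogonal group (paper's Lemma
6.6, after Sirola): `B ∈ N(O_{n+1})` iff `Bᵀ B = r·I` for some `r > 0`. -/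
theorem mem_normalizer_orthogonal_iff (n : ℕ) (B : GL (Fin (n + 1)) ℝ) :
    B ∈ Subgroup.normalizer (OGroup n : Set (GL (Fin (n + 1)) ℝ)) ↔
      ∃ r : ℝ, 0 < r ∧
        (B : Matrix (Fin (n + 1)) (Fin (n + 1)) ℝ)ᵀ *
          (B : Matrix (Fin (n + 1)) (Fin (n + 1)) ℝ) = r • (1 : Matrix (Fin (n + 1)) (Fin (n + 1)) ℝ) := by
  constructor
  · intro hB
    obtain ⟨r, hr⟩ := mem_range_scalar_of_forall_commute_orthogonal (by simp [ringChar.eq_zero])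
      fun A hA => commute_transpose_mul_self_of_mem_normalizer_OGroup hB hA
    have hS : (B : Matrix (Fin (n + 1)) (Fin (n + 1)) ℝ)ᵀ * B = r • 1 := by
      rw [← hr, smul_one_eq_diagonal, scalar_apply]
    exact ⟨r, pos_of_transpose_mul_self_eq_smul_one B.isUnit hS, hS⟩
  · rintro ⟨r, -, hB⟩
    exact mem_normalizer_OGroup_of_transpose_mul_self_eq hB
end

section
/- Let n ≥ 0 and O_{n+1} = { A ∈ GL_{n+1}(ℝ) : Aᵀ A = I }, with normalizer N(O_{n+1}) in GL_{n+1}(ℝ). For every B ∈ N(O_{n+1}) there is a unique positive real number p(B) with Bᵀ B = p(B)·I, and the resulting map p : N(O_{n+1}) → ℝ₊ˣ is a surjective group homomorphism onto the multiplicative group of positive real numbers, with kernel exactly O_{n+1}. -/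
/-! For `B` in the normalizer, `B A B⁻¹` is orthogonal whenever `A` is, which says exactly that
`S = Bᵀ B` satisfies `Aᵀ S A = S`, i.e. `S` commutes with every orthogonal `A`. The coordinate
reflections `1 - 2 Eᵢᵢ` and the transposition matrices `P` are orthogonal, and they recover every
matrix unit as `Eᵢⱼ = Eᵢᵢ P Eⱼⱼ`; so `S` is scalar, and its scalar is positive because `S` is
positive definite. Multiplicativity of `p` comes from `(BC)ᵀ(BC) = Cᵀ (p(B) • 1) C`, surjectivity
from the central matrices `√r • 1`, and `p(B) = 1` is literally `Bᵀ B = 1`. -/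

open Matrix

namespace Matrix

variable {n R : Type*} [Fintype n] [DecidableEq n] [CommRing R]

theorem mem_range_scalar_of_forall_commute_of_transpose_mul_self_eq_one [Invertible (2 : R)]
    {S : Matrix n n R} (hS : ∀ A : Matrix n n R, Aᵀ * A = 1 → Commute A S) :
    S ∈ Set.range (scalar n) := by
  have h_diag : ∀ i, Commute (single i i (1 : R)) S := by
    intro i
    set E : Matrix n n R := single i i 1
    have hreflection : (1 - (2 : R) • E)ᵀ * (1 - (2 : R) • E) = 1 := by
      have hE : E * E = E := by simp [E]
      have hEt : Eᵀ = E := by simp [E]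
      rw [transpose_sub, transpose_one, transpose_smul, hEt]
      simp only [sub_mul, mul_sub, one_mul, mul_one, smul_mul_smul_comm, hE]
      module
    have h2E : Commute ((2 : R) • E) S := by
      simpa using (Commute.one_left S).sub_left (hS _ hreflection)
    simpa [smul_smul] using h2E.smul_left (⅟2 : R)
  refine mem_range_scalar_iff_commute_single'.mpr fun i j => ?_
  set P := (Equiv.swap i j).permMatrix R
  have hP : Pᵀ * P = 1 := by simp [P, ← permMatrix_mul]
  have hsingle : single i j (1 : R) = single i i 1 * P * single j j 1 := by
    simp [P]
  rw [hsingle]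
  exact ((h_diag i).mul_left (hS P hP)).mul_left (h_diag j)

end Matrix

theorem Matrix.GeneralLinearGroup.transpose_mul_self_diag_pos {n : Type*} [Fintype n]
    [DecidableEq n] (B : GL n ℝ) (i : n) : 0 < ((B : Matrix n n ℝ)ᵀ * B) i i := by
  have hB : ((B : Matrix n n ℝ)ᴴ * B).PosDef :=
    .conjTranspose_mul_self _ (mulVec_injective_of_isUnit B.isUnit)
  simpa [conjTranspose_eq_transpose_of_trivial] using hB.diag_pos (i := i)

namespace OGroup

variable {n : ℕ}

theorem commute_transpose_mul_self_of_mem_normalizer {B : GL (Fin (n + 1)) ℝ}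
    (hB : B ∈ Subgroup.normalizer (OGroup n : Set (GL (Fin (n + 1)) ℝ)))
    {A : Matrix (Fin (n + 1)) (Fin (n + 1)) ℝ} (hA : Aᵀ * A = 1) :
    Commute A ((B : Matrix (Fin (n + 1)) (Fin (n + 1)) ℝ)ᵀ * B) := by
  have hA' : A * Aᵀ = 1 := mul_eq_one_comm.mp hA
  set C := B * ⟨A, Aᵀ, hA', hA⟩ * B⁻¹
  have hC : (C : Matrix (Fin (n + 1)) (Fin (n + 1)) ℝ)ᵀ * C = 1 :=
    (Subgroup.mem_normalizer_iff.mp hB _).mp hA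
  have hBA : (B : Matrix (Fin (n + 1)) (Fin (n + 1)) ℝ) * A = C * B := by
    simp [C, mul_assoc]
  set M : Matrix (Fin (n + 1)) (Fin (n + 1)) ℝ := ↑B
  have hconj : Aᵀ * (Mᵀ * M) * A = Mᵀ * M :=
    calc Aᵀ * (Mᵀ * M) * A = (M * A)ᵀ * (M * A) := by
          simp only [transpose_mul, mul_assoc]
      _ = Mᵀ * M := by rw [hBA, transpose_mul, mul_assoc, ← mul_assoc _ _ M, hC, one_mul]
  calc A * (Mᵀ * M) = A * (Aᵀ * (Mᵀ * M) * A) := by rw [hconj]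
    _ = (A * Aᵀ) * (Mᵀ * M) * A := by simp only [mul_assoc]
    _ = Mᵀ * M * A := by rw [hA', one_mul]

theorem transpose_mul_self_eq_smul_one {B : GL (Fin (n + 1)) ℝ}
    (hB : B ∈ Subgroup.normalizer (OGroup n : Set (GL (Fin (n + 1)) ℝ))) :
    (B : Matrix (Fin (n + 1)) (Fin (n + 1)) ℝ)ᵀ * B =
      ((B : Matrix (Fin (n + 1)) (Fin (n + 1)) ℝ)ᵀ * B) 0 0 • 1 := by
  obtain ⟨r, hr⟩ := mem_range_scalar_of_forall_commute_of_transpose_mul_self_eq_one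
    fun _ hA => commute_transpose_mul_self_of_mem_normalizer hB hA
  rw [← hr]
  simp [smul_one_eq_diagonal]

/-- The map `p`, read off from the `(0, 0)` entry of the scalar matrix `Bᵀ B`. -/
noncomputable def normalizerMultiplier :
    Subgroup.normalizer (OGroup n : Set (GL (Fin (n + 1)) ℝ)) →* {x : ℝ // 0 < x} where
  toFun B := ⟨(((B : GL (Fin (n + 1)) ℝ) : Matrix (Fin (n + 1)) (Fin (n + 1)) ℝ)ᵀ *
      (B : GL (Fin (n + 1)) ℝ)) 0 0, GeneralLinearGroup.transpose_mul_self_diag_pos _ 0⟩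
  map_one' := by ext; simp
  map_mul' := by
    rintro ⟨B, hB⟩ ⟨C, -⟩
    ext
    simp only [MulMemClass.coe_mul, Positive.val_mul, Units.val_mul]
    have hB' := transpose_mul_self_eq_smul_one hB
    set P : Matrix (Fin (n + 1)) (Fin (n + 1)) ℝ := ↑B
    set Q : Matrix (Fin (n + 1)) (Fin (n + 1)) ℝ := ↑C
    set r := (Pᵀ * P) 0 0
    have hPQ : (P * Q)ᵀ * (P * Q) = r • (Qᵀ * Q) := by
      rw [transpose_mul, Matrix.mul_assoc, ← Matrix.mul_assoc Pᵀ, hB', Matrix.smul_mul, one_mul,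
        Matrix.mul_smul]
    rw [hPQ, Matrix.smul_apply, smul_eq_mul]

theorem transpose_mul_self_eq_normalizerMultiplier_smul
    (B : Subgroup.normalizer (OGroup n : Set (GL (Fin (n + 1)) ℝ))) :
    ((B : GL (Fin (n + 1)) ℝ) : Matrix (Fin (n + 1)) (Fin (n + 1)) ℝ)ᵀ *
      (B : GL (Fin (n + 1)) ℝ) = (normalizerMultiplier B : ℝ) • 1 :=
  transpose_mul_self_eq_smul_one B.2

theorem normalizerMultiplier_surjective :
    Function.Surjective (normalizerMultiplier (n := n)) := by
  intro r
  let u : ℝˣ := Units.mk0 (√r) (Real.sqrt_pos.mpr r.2).ne'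
  have hu : GeneralLinearGroup.scalar (Fin (n + 1)) u ∈
      Subgroup.normalizer (OGroup n : Set (GL (Fin (n + 1)) ℝ)) :=
    Subgroup.center_le_normalizer _ <| by
      rw [GeneralLinearGroup.center_eq_range_scalar]
      exact ⟨u, rfl⟩
  refine ⟨⟨_, hu⟩, Subtype.ext ?_⟩
  simp [normalizerMultiplier, u, GeneralLinearGroup.coe_scalar, Real.mul_self_sqrt r.2.le]

theorem normalizerMultiplier_eq_one_iff
    (B : Subgroup.normalizer (OGroup n : Set (GL (Fin (n + 1)) ℝ))) :
    normalizerMultiplier B = 1 ↔ (B : GL (Fin (n + 1)) ℝ) ∈ OGroup n := by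
  change _ ↔ _ = 1
  rw [transpose_mul_self_eq_normalizerMultiplier_smul, ← Subtype.val_inj, Positive.val_one,
    ← (smul_left_injective ℝ (one_ne_zero (α := Matrix (Fin (n + 1)) (Fin (n + 1)) ℝ))).eq_iff,
    one_smul]

end OGroup

/-- Exactness part of the paper's Lemma 6.6 (lem:N(O)): each `B ∈ N(O_{n+1})`
satisfies `Bᵀ B = p(B)·I` for a unique positive real `p(B)`, and the resulting
map `p : N(O_{n+1}) → ℝ₊ˣ` into the multiplicative group of positive reals is
a surjective group homomorphism with kernel exactly `O_{n+1}`. -/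
theorem orthogonal_normalizer_exact_sequence (n : ℕ) :
    (∀ B : (Subgroup.normalizer (OGroup n : Set (GL (Fin (n + 1)) ℝ))),
      ∃! r : {x : ℝ // 0 < x},
        ((B : GL (Fin (n + 1)) ℝ) : Matrix (Fin (n + 1)) (Fin (n + 1)) ℝ)ᵀ *
          ((B : GL (Fin (n + 1)) ℝ) : Matrix (Fin (n + 1)) (Fin (n + 1)) ℝ)
            = (r : ℝ) • (1 : Matrix (Fin (n + 1)) (Fin (n + 1)) ℝ)) ∧
    ∃ p : (Subgroup.normalizer (OGroup n : Set (GL (Fin (n + 1)) ℝ))) →* {x : ℝ // 0 < x},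
      (∀ B : (Subgroup.normalizer (OGroup n : Set (GL (Fin (n + 1)) ℝ))),
        ((B : GL (Fin (n + 1)) ℝ) : Matrix (Fin (n + 1)) (Fin (n + 1)) ℝ)ᵀ *
          ((B : GL (Fin (n + 1)) ℝ) : Matrix (Fin (n + 1)) (Fin (n + 1)) ℝ)
            = (p B : ℝ) • (1 : Matrix (Fin (n + 1)) (Fin (n + 1)) ℝ)) ∧
      Function.Surjective p ∧
      ∀ B : (Subgroup.normalizer (OGroup n : Set (GL (Fin (n + 1)) ℝ))), p B = 1 ↔ (B : GL (Fin (n + 1)) ℝ) ∈ OGroup n := by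
  refine ⟨fun B => ⟨OGroup.normalizerMultiplier B,
    OGroup.transpose_mul_self_eq_normalizerMultiplier_smul B, fun r hr => ?_⟩,
    OGroup.normalizerMultiplier, OGroup.transpose_mul_self_eq_normalizerMultiplier_smul,
    OGroup.normalizerMultiplier_surjective, OGroup.normalizerMultiplier_eq_one_iff⟩
  exact Subtype.ext <|
    smul_left_injective ℝ (one_ne_zero (α := Matrix (Fin (n + 1)) (Fin (n + 1)) ℝ))
      (hr.symm.trans (OGroup.transpose_mul_self_eq_normalizerMultiplier_smul B))
end
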